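/- arXiv:2011.01328 — 3 statements merged into one kernel-verified Lean document; each statement's English description precedes it below -/
import Mathlib

section
/- Let R be an integral domain with distinguished element δ ≠ ±2, and suppose [ℓ] = 0 for ℓ minimal positive. If n ≡ m (mod 2) and Δ_n = Δ_m in R, then n ≡ m (mod 2ℓ) or n ≡ -m (mod 2ℓ). -/
/-!
Solutions of `x (k + 1) = δ * x k - x (k - 1)` on `ℤ` are determined by two consecutive values.
Comparing solutions this way gives `[k + ℓ] = [ℓ + 1] [k]` with `[ℓ + 1] = -[ℓ - 1] ≠ 0`, so the
zeros of `[·]` are exactly `ℓℤ`, and the product formula `Δ (s + t) - Δ (s - t) = (δ² - 4) [s] [t]`.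
Since `n ≡ m (mod 2)` we may write `n = s - t`, `m = s + t`; then `Δ n = Δ m` forces `[s] = 0` or
`[t] = 0` in the domain `R`, i.e. `ℓ ∣ s` or `ℓ ∣ t`.
-/

def QuantumRecurrence {R : Type*} [CommRing R] (δ : R) (f : ℤ → R) : Prop :=
  ∀ n : ℤ, f (n + 1) = δ * f n - f (n - 1)

namespace QuantumRecurrence

variable {R : Type*} [CommRing R] {δ : R} {f g : ℤ → R}

theorem ext (hf : QuantumRecurrence δ f) (hg : QuantumRecurrence δ g)
    (h0 : f 0 = g 0) (h1 : f 1 = g 1) (k : ℤ) : f k = g k := by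
  suffices ∀ k : ℤ, f k = g k ∧ f (k + 1) = g (k + 1) from (this k).1
  intro k
  induction k using Int.induction_on with
  | zero => exact ⟨h0, by simpa using h1⟩
  | succ k ih =>
    refine ⟨ih.2, ?_⟩
    rw [hf, hg, add_sub_cancel_right, ih.1, ih.2]
  | pred k ih =>
    refine ⟨?_, by simpa using ih.1⟩
    have hfk := hf (-(k : ℤ))
    have hgk := hg (-(k : ℤ))
    rw [ih.1, ih.2] at hfk
    linear_combination hfk - hgk

theorem sub (hf : QuantumRecurrence δ f) (hg : QuantumRecurrence δ g) :
    QuantumRecurrence δ (fun k ↦ f k - g k) := fun n ↦ by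
  linear_combination hf n - hg n

theorem const_mul (hf : QuantumRecurrence δ f) (c : R) :
    QuantumRecurrence δ (fun k ↦ c * f k) := fun n ↦ by
  linear_combination c * hf n

theorem comp_add_right (hf : QuantumRecurrence δ f) (a : ℤ) :
    QuantumRecurrence δ (fun k ↦ f (k + a)) := fun n ↦ by
  simpa only [add_right_comm, sub_add_eq_add_sub] using hf (n + a)

theorem comp_neg (hf : QuantumRecurrence δ f) :
    QuantumRecurrence δ (fun k ↦ f (-k)) := fun n ↦ by
  have h := hf (-n)
  dsimp only
  rw [show -(n + 1) = -n - 1 by ring, show -(n - 1) = -n + 1 by ring]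
  linear_combination h

theorem comp_sub_left (hf : QuantumRecurrence δ f) (a : ℤ) :
    QuantumRecurrence δ (fun k ↦ f (a - k)) := by
  simpa only [neg_add_eq_sub] using (hf.comp_add_right a).comp_neg

theorem diff (hf : QuantumRecurrence δ f) :
    QuantumRecurrence δ (fun n ↦ f (n + 1) - f (n - 1)) := by
  simpa only [sub_eq_add_neg] using (hf.comp_add_right 1).sub (hf.comp_add_right (-1))

variable (hf : QuantumRecurrence δ f) (h0 : f 0 = 0) (h1 : f 1 = 1)
include hf h0 h1

theorem add_eq_mul_of_eq_zero {a : ℤ} (ha : f a = 0) (k : ℤ) :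
    f (k + a) = f (a + 1) * f k :=
  (hf.comp_add_right a).ext (hf.const_mul _) (by simp [ha, h0]) (by simp [h1, add_comm]) k

theorem diff_add_sub_diff_sub (s k : ℤ) :
    (f (s + k + 1) - f (s + k - 1)) - (f (s - k + 1) - f (s - k - 1)) =
      (δ ^ 2 - 4) * f s * f k := by
  have h : QuantumRecurrence δ
      fun k ↦ (f (s + k + 1) - f (s + k - 1)) - (f (s - k + 1) - f (s - k - 1)) := by
    simpa only [add_comm s] using (hf.diff.comp_add_right s).sub (hf.diff.comp_sub_left s)
  refine h.ext (hf.const_mul _) (by simp [h0]) ?_ k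
  have e₁ := hf (s + 1)
  have e₂ := hf s
  have e₃ := hf (s - 1)
  simp only [h1, mul_one, add_sub_cancel_right, sub_add_cancel] at e₁ e₃ ⊢
  linear_combination e₁ + e₃ + δ * e₂

theorem eq_zero_iff_dvd [IsDomain R] {ℓ : ℕ} (hℓ : 0 < ℓ) (hvan : f ℓ = 0)
    (hmin : ∀ j : ℕ, 0 < j → j < ℓ → f j ≠ 0) (k : ℤ) : f k = 0 ↔ (ℓ : ℤ) ∣ k := by
  have hsucc : f (ℓ + 1) ≠ 0 := by
    have hℓ2 : 1 < ℓ := by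
      refine lt_of_le_of_ne hℓ fun hℓ1 ↦ ?_
      subst hℓ1
      simp [h1] at hvan
    rw [hf ℓ, hvan, mul_zero, zero_sub, neg_ne_zero]
    simpa [Nat.cast_sub hℓ] using hmin (ℓ - 1) (by omega) (by omega)
  have hper : Function.Periodic (fun k ↦ f k = 0) ℓ := fun k ↦ by
    simp only [hf.add_eq_mul_of_eq_zero h0 h1 hvan, mul_eq_zero, hsucc, false_or]
  rw [← hper.sub_int_mul_eq (k / ℓ), Int.cast_id, mul_comm, ← Int.emod_def,
    Int.dvd_iff_emod_eq_zero]
  refine ⟨fun hk ↦ ?_, fun hk ↦ by rw [hk, h0]⟩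
  by_contra hne
  have hlt := Int.emod_lt_of_pos k (by omega : (0 : ℤ) < ℓ)
  have hnn := Int.emod_nonneg k (by omega : (ℓ : ℤ) ≠ 0)
  exact hmin (k % ℓ).toNat (by omega) (by omega) (by rwa [Int.toNat_of_nonneg hnn])

end QuantumRecurrence

/-- Let `R` be a domain with `δ ≠ ±2` and `ℓ` minimal positive with `[ℓ] = 0`.
If `n ≡ m (mod 2)` and `Δ_n = Δ_m`, then `n ≡ ±m (mod 2ℓ)`. -/
theorem stmt8 {R : Type*} [CommRing R] [IsDomain R] (δ : R)
    (hδ : δ ≠ 2) (hδ' : δ ≠ -2)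
    (f : ℤ → R) (h0 : f 0 = 0) (h1 : f 1 = 1)
    (hrec : ∀ n : ℤ, f (n + 1) = δ * f n - f (n - 1))
    (ℓ : ℕ) (hℓ : 0 < ℓ) (hvan : f ℓ = 0)
    (hmin : ∀ j : ℕ, 0 < j → j < ℓ → f j ≠ 0)
    (n m : ℤ) (hpar : n ≡ m [ZMOD 2])
    (hΔ : f (n + 1) - f (n - 1) = f (m + 1) - f (m - 1)) :
    n ≡ m [ZMOD (2 * ℓ)] ∨ n ≡ -m [ZMOD (2 * ℓ)] := by
  have hf : QuantumRecurrence δ f := hrec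
  have hδ2 : δ ^ 2 - 4 ≠ 0 := by
    rw [show δ ^ 2 - 4 = (δ - 2) * (δ + 2) by ring]
    exact mul_ne_zero (sub_ne_zero.mpr hδ) (by rwa [ne_eq, add_eq_zero_iff_eq_neg])
  obtain ⟨t, hdiff⟩ := hpar.dvd
  obtain ⟨s, rfl⟩ : ∃ s, n = s - t := ⟨n + t, by ring⟩
  obtain rfl : m = s + t := by omega
  have hst : f s * f t = 0 := by
    have h := hf.diff_add_sub_diff_sub h0 h1 s t
    rw [← hΔ, sub_self, mul_assoc, eq_comm] at h
    exact (mul_eq_zero.mp h).resolve_left hδ2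
  have hdvd (k : ℤ) : f k = 0 → 2 * (ℓ : ℤ) ∣ 2 * k :=
    fun hk ↦ mul_dvd_mul_left 2 ((hf.eq_zero_iff_dvd h0 h1 hℓ hvan hmin k).mp hk)
  rcases mul_eq_zero.mp hst with hs | ht
  · exact .inr <| Int.modEq_iff_dvd.mpr <| (hdvd s hs).trans ⟨-1, by ring⟩
  · exact .inl <| Int.modEq_iff_dvd.mpr <| (hdvd t ht).trans ⟨1, by ring⟩
end

section
/- For n ≥ m of the same parity with r = (n-m)/2, the number of monic (n,m)-Temperley–Lieb diagrams (planar non-crossing perfect matchings between n left points and m right points in which every right point is matched to a left point) equals the number of standard Young tableaux of shape (n-r, r), which is binomial(n, r) - binomial(n, r-1). -/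
open Finset

def gd (n r : ℕ) : Finset (Finset ℕ) :=
  ((Finset.range n).powersetCard r).filter
    (fun S => ∀ s ∈ S, 2 * (S.filter (· ≤ s)).card ≤ s + 1)

lemma mem_gd {n r : ℕ} {S : Finset ℕ} :
    S ∈ gd n r ↔ (S ⊆ range n ∧ S.card = r) ∧
      ∀ s ∈ S, 2 * (S.filter (· ≤ s)).card ≤ s + 1 := by
  simp [gd, Finset.mem_powersetCard]

lemma gd_zero (n : ℕ) : gd n 0 = {∅} := by
  ext S
  simp only [mem_gd, Finset.card_eq_zero, Finset.mem_singleton]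
  constructor
  · rintro ⟨⟨_, h⟩, _⟩; exact h
  · rintro rfl; simp

lemma gd_vanish {n r : ℕ} (hr : 0 < r) (h : n < 2 * r) : gd n r = ∅ := by
  ext S
  simp only [mem_gd, Finset.notMem_empty, iff_false, not_and]
  rintro ⟨hsub, hcard⟩ hball
  have hne : S.Nonempty := by rw [← Finset.card_pos, hcard]; exact hr
  have hmax := S.max'_mem hne
  have h1 := hball _ hmax
  have h2 : S.filter (· ≤ S.max' hne) = S := by
    apply Finset.filter_true_of_mem
    intro x hx; exact S.le_max' x hx
  rw [h2, hcard] at h1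
  have h3 := hsub hmax
  rw [Finset.mem_range] at h3
  omega

lemma gd_rec (n r : ℕ) :
    (gd (n+1) (r+1)).card =
      (gd n (r+1)).card + if 2 * (r+1) ≤ n + 1 then (gd n r).card else 0 := by
  have hsplit := Finset.card_filter_add_card_filter_not
    (s := gd (n+1) (r+1)) (p := fun S => n ∈ S)
  have hnot : (gd (n+1) (r+1)).filter (fun S => ¬ n ∈ S) = gd n (r+1) := by
    ext S
    simp only [Finset.mem_filter, mem_gd]
    constructor
    · rintro ⟨⟨⟨hsub, hcard⟩, hball⟩, hn⟩
      refine ⟨⟨?_, hcard⟩, hball⟩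
      intro x hx
      have := hsub hx
      rw [Finset.mem_range] at this ⊢
      rcases Nat.lt_succ_iff_lt_or_eq.mp this with h | h
      · exact h
      · exact absurd (h ▸ hx) hn
    · rintro ⟨⟨hsub, hcard⟩, hball⟩
      have hn : n ∉ S := fun hn => by
        have := hsub hn; rw [Finset.mem_range] at this; omega
      refine ⟨⟨⟨fun x hx => ?_, hcard⟩, hball⟩, hn⟩
      have := hsub hx; rw [Finset.mem_range] at this ⊢; omega
  have hmem : ((gd (n+1) (r+1)).filter (fun S => n ∈ S)).card
      = if 2 * (r+1) ≤ n + 1 then (gd n r).card else 0 := by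
    by_cases hle : 2 * (r+1) ≤ n + 1
    · rw [if_pos hle]
      refine Finset.card_bij' (fun S _ => S.erase n) (fun T _ => insert n T) ?_ ?_ ?_ ?_
      · rintro S hS
        rw [Finset.mem_filter, mem_gd] at hS
        obtain ⟨⟨⟨hsub, hcard⟩, hball⟩, hn⟩ := hS
        rw [mem_gd]
        have herase_sub : S.erase n ⊆ range n := by
          intro x hx
          have hxn := Finset.ne_of_mem_erase hx
          have := hsub (Finset.mem_of_mem_erase hx)
          rw [Finset.mem_range] at this ⊢; omega
        refine ⟨⟨herase_sub, ?_⟩, ?_⟩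
        · rw [Finset.card_erase_of_mem hn, hcard]; omega
        · intro s hs
          have hsS := Finset.mem_of_mem_erase hs
          have hsn : s < n := by
            have := herase_sub hs; rwa [Finset.mem_range] at this
          have hfe : (S.erase n).filter (· ≤ s) = S.filter (· ≤ s) := by
            rw [Finset.filter_erase]
            apply Finset.erase_eq_of_notMem
            simp only [Finset.mem_filter]
            rintro ⟨-, h⟩; omega
          rw [hfe]
          exact hball s hsS
      · rintro T hT
        rw [mem_gd] at hT
        obtain ⟨⟨hsub, hcard⟩, hball⟩ := hT
        have hn : n ∉ T := fun hn => by
          have := hsub hn; rw [Finset.mem_range] at this; omega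
        rw [Finset.mem_filter, mem_gd]
        refine ⟨⟨⟨?_, ?_⟩, ?_⟩, Finset.mem_insert_self n T⟩
        · intro x hx
          rcases Finset.mem_insert.mp hx with rfl | hx
          · exact Finset.self_mem_range_succ _
          · have := hsub hx; rw [Finset.mem_range] at this ⊢; omega
        · rw [Finset.card_insert_of_notMem hn, hcard]
        · intro s hs
          rcases Finset.mem_insert.mp hs with rfl | hsT
          · have : (insert s T).filter (· ≤ s) = insert s T := by
              apply Finset.filter_true_of_mem
              intro x hx
              rcases Finset.mem_insert.mp hx with rfl | hx
              · exact le_refl _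
              · have := hsub hx; rw [Finset.mem_range] at this; omega
            rw [this, Finset.card_insert_of_notMem hn, hcard]
            omega
          · have hsn : s < n := by
              have := hsub hsT; rwa [Finset.mem_range] at this
            have : (insert n T).filter (· ≤ s) = T.filter (· ≤ s) := by
              rw [Finset.filter_insert, if_neg (by omega)]
            rw [this]
            exact hball s hsT
      · rintro S hS
        rw [Finset.mem_filter] at hS
        exact Finset.insert_erase hS.2
      · rintro T hT
        rw [mem_gd] at hT
        have hn : n ∉ T := fun hn => by
          have := hT.1.1 hn; rw [Finset.mem_range] at this; omega
        exact Finset.erase_insert hn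
    · rw [if_neg hle]
      rw [Finset.card_eq_zero]
      ext S
      simp only [Finset.mem_filter, mem_gd, Finset.notMem_empty, iff_false, not_and]
      rintro ⟨⟨hsub, hcard⟩, hball⟩ hn
      have h1 := hball n hn
      have h2 : S.filter (· ≤ n) = S := by
        apply Finset.filter_true_of_mem
        intro x hx
        have := hsub hx; rw [Finset.mem_range] at this; omega
      rw [h2, hcard] at h1
      omega
  rw [← hsplit, hnot, hmem, Nat.add_comm]

lemma gd_card (n r : ℕ) (h : 2 * r ≤ n + 1) :
    ((gd n r).card : ℤ) = (n.choose r : ℤ)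
      - (if r = 0 then 0 else (n.choose (r-1) : ℤ)) := by
  induction n generalizing r with
  | zero =>
    have : r = 0 := by omega
    subst this
    simp [gd_zero]
  | succ n ih =>
    cases r with
    | zero => simp [gd_zero]
    | succ t =>
      rw [gd_rec]
      by_cases hle : 2 * (t+1) ≤ n + 1
      · rw [if_pos hle]
        push_cast
        rw [ih (t+1) hle, ih t (by omega)]
        have p1 : (n+1).choose (t+1) = n.choose t + n.choose (t+1) :=
          Nat.choose_succ_succ n t
        cases t with
        | zero =>
          simp only [if_neg (Nat.one_ne_zero), if_pos rfl]
          simp [p1, Nat.choose_zero_right]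
        | succ u =>
          have p2 : (n+1).choose (u+1) = n.choose u + n.choose (u+1) :=
            Nat.choose_succ_succ n u
          simp only [if_neg (Nat.succ_ne_zero _), Nat.succ_sub_one]
          push_cast [p1, p2]
          ring
      · rw [if_neg hle]
        have hn : n + 1 = 2 * t + 1 := by omega
        rw [gd_vanish (Nat.succ_pos t) (by omega)]
        simp only [Nat.cast_zero, Finset.card_empty, if_neg (Nat.succ_ne_zero t),
          Nat.succ_sub_one, add_zero]
        have hsym : (n+1).choose (t+1) = (n+1).choose t := by
          have := Nat.choose_symm (n := n+1) (k := t+1) (by omega)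
          rw [show n + 1 - (t+1) = t by omega] at this
          exact this.symm
        rw [hsym]
        push_cast
        ring

lemma filter_image_val {n : ℕ} (S : Finset (Fin n)) (s : Fin n) :
    (S.image Fin.val).filter (· ≤ (s : ℕ)) = (S.filter (· ≤ s)).image Fin.val := by
  ext a
  simp only [Finset.mem_filter, Finset.mem_image, Fin.le_def]
  constructor
  · rintro ⟨⟨b, hb, rfl⟩, hle⟩
    exact ⟨b, ⟨hb, hle⟩, rfl⟩
  · rintro ⟨b, ⟨hb, hle⟩, rfl⟩
    exact ⟨⟨b, hb, rfl⟩, hle⟩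

lemma bridge (n r : ℕ) :
    Nat.card {S : Finset (Fin n) //
        S.card = r ∧ ∀ s ∈ S, 2 * (S.filter (· ≤ s)).card ≤ (s : ℕ) + 1}
      = (gd n r).card := by
  rw [Nat.card_eq_fintype_card, Fintype.card_subtype]
  refine Finset.card_bij (fun S _ => S.image Fin.val) ?_ ?_ ?_
  · rintro S hS
    rw [Finset.mem_filter] at hS
    obtain ⟨-, hcard, hball⟩ := hS
    rw [mem_gd]
    refine ⟨⟨?_, ?_⟩, ?_⟩
    · intro a ha
      rw [Finset.mem_image] at ha
      obtain ⟨b, -, rfl⟩ := ha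
      exact Finset.mem_range.mpr b.isLt
    · rw [Finset.card_image_of_injective _ Fin.val_injective, hcard]
    · intro a ha
      rw [Finset.mem_image] at ha
      obtain ⟨s, hs, rfl⟩ := ha
      rw [filter_image_val, Finset.card_image_of_injective _ Fin.val_injective]
      exact hball s hs
  · intro S1 h1 S2 h2 h
    exact Finset.image_injective Fin.val_injective h
  · rintro T hT
    rw [mem_gd] at hT
    obtain ⟨⟨hsub, hcard⟩, hball⟩ := hT
    have hlt : ∀ a ∈ T, a < n := fun a ha => Finset.mem_range.mp (hsub ha)
    refine ⟨T.attachFin hlt, ?_, ?_⟩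
    · have himg : (T.attachFin hlt).image Fin.val = T := by
        ext a
        simp only [Finset.mem_image, Finset.mem_attachFin]
        constructor
        · rintro ⟨b, hb, rfl⟩; exact hb
        · intro ha; exact ⟨⟨a, hlt a ha⟩, ha, rfl⟩
      rw [Finset.mem_filter]
      refine ⟨Finset.mem_univ _, ?_, ?_⟩
      · rw [Finset.card_attachFin, hcard]
      · intro s hs
        rw [Finset.mem_attachFin] at hs
        have hfi := filter_image_val (T.attachFin hlt) s
        rw [himg] at hfi
        have key : ((T.attachFin hlt).filter (· ≤ s)).card
            = (T.filter (· ≤ (s : ℕ))).card := by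
          rw [hfi, Finset.card_image_of_injective _ Fin.val_injective]
        rw [key]
        exact hball _ hs
    · ext a
      simp only [Finset.mem_image, Finset.mem_attachFin]
      constructor
      · rintro ⟨b, hb, rfl⟩; exact hb
      · intro ha; exact ⟨⟨a, hlt a ha⟩, ha, rfl⟩

/-- The number of monic `(n,m)`-Temperley–Lieb diagrams (encoded by their set `S` of
`r = (n-m)/2` "closing" sites, subject to the planarity/ballot condition that the
`j`-th smallest closing site has at least `j` non-closing sites before it, i.e.
`2·|S ∩ [0, s]| ≤ s + 1` for every `s ∈ S`) equals `C(n, r) - C(n, r-1)`, the number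
of standard Young tableaux of shape `(n - r, r)`. -/
theorem stmt12 (n m : ℕ) (hmn : m ≤ n) (hpar : n % 2 = m % 2)
    (r : ℕ) (hr : r = (n - m) / 2) :
    (Nat.card {S : Finset (Fin n) //
        S.card = r ∧ ∀ s ∈ S, 2 * (S.filter (· ≤ s)).card ≤ (s : ℕ) + 1} : ℤ)
      = (n.choose r : ℤ) - (if r = 0 then 0 else (n.choose (r - 1) : ℤ)) := by
  have h2r : 2 * r ≤ n := by omega
  rw [bridge n r]
  exact gd_card n r (by omega)
end

section
/- Hook length formula for forests: let (F, ≤) be a finite forest (a poset in which the set of elements above any given element is a chain, i.e., if a ≤ b and a ≤ c then b ≤ c or c ≤ b), and let c(x) = |{y ∈ F : y ≤ x}|. Then the quotient h_F = [|F|]! / ∏_{x∈F} [c(x)] is a polynomial in δ (an element of ℤ[δ]). -/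
open Polynomial

/-- The quantum numbers `[n] ∈ ℤ[δ]`, with `δ = X`. -/
noncomputable def qnumP : ℕ → Polynomial ℤ
  | 0 => 0
  | 1 => 1
  | n + 2 => X * qnumP (n + 1) - qnumP n

/-- The quantum factorial `[n]! = [1][2]⋯[n]` in `ℤ[δ]`. -/
noncomputable def qfactP (n : ℕ) : Polynomial ℤ :=
  ∏ i ∈ Finset.range n, qnumP (i + 1)


/-!
Pick a maximal element `r` of the forest. Its down-set `T` is a tree with root `r`, and by the
forest property and maximality of `r` its complement `U` is downward closed too, so hook
lengths computed in `T` and in `U` agree with those in the whole forest. Hence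
`h_F = [|F| choose |T|] · h_T · h_U`, while removing the root gives `h_T = h_{T ∖ {r}}`; both
reduce to smaller forests. Divisibility of `[a + b]!` by `[a]! [b]!` comes from the addition
formula `[a + b + 1] = [a + 1][b + 1] - [a][b]`, which splits `[a + b + 2]!` into two terms
each divisible by `[a + 1]! [b + 1]!` by induction.
-/

open Finset

lemma qnumP_add_two (n : ℕ) : qnumP (n + 2) = X * qnumP (n + 1) - qnumP n := rfl

lemma qnumP_add_add_one (m n : ℕ) :
    qnumP (m + n + 1) = qnumP (m + 1) * qnumP (n + 1) - qnumP m * qnumP n := by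
  induction m using Nat.twoStepInduction with
  | zero => simp [qnumP]
  | one => rw [show 1 + n + 1 = n + 2 by omega]; simp [qnumP]
  | more m ih₀ ih₁ =>
    rw [show m + 2 + n + 1 = (m + n + 1) + 2 by omega, qnumP_add_two,
      show m + n + 1 + 1 = m + 1 + n + 1 by omega, ih₁, ih₀, qnumP_add_two (m + 1), qnumP_add_two]
    ring

lemma qfactP_succ (n : ℕ) : qfactP (n + 1) = qfactP n * qnumP (n + 1) :=
  prod_range_succ _ _

lemma qfactP_mul_qfactP_dvd : ∀ a b : ℕ, qfactP a * qfactP b ∣ qfactP (a + b)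
  | 0, b => by simp [qfactP]
  | a + 1, 0 => by simp [qfactP]
  | a + 1, b + 1 => by
    have hsplit : qfactP (a + 1 + (b + 1)) =
        qnumP (a + 1) * qnumP (b + 2) * qfactP (a + (b + 1)) -
          qnumP a * qnumP (b + 1) * qfactP (a + 1 + b) := by
      rw [show a + 1 + (b + 1) = a + (b + 1) + 1 by omega, qfactP_succ, qnumP_add_add_one,
        show a + 1 + b = a + (b + 1) by omega]
      ring
    rw [hsplit]
    apply dvd_sub
    · calc qfactP (a + 1) * qfactP (b + 1) = qnumP (a + 1) * (qfactP a * qfactP (b + 1)) := by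
            rw [qfactP_succ a]; ring
        _ ∣ qnumP (a + 1) * qnumP (b + 2) * qfactP (a + (b + 1)) :=
            mul_dvd_mul (dvd_mul_right _ _) (qfactP_mul_qfactP_dvd a (b + 1))
    · calc qfactP (a + 1) * qfactP (b + 1) = qnumP (b + 1) * (qfactP (a + 1) * qfactP b) := by
            rw [qfactP_succ b]; ring
        _ ∣ qnumP a * qnumP (b + 1) * qfactP (a + 1 + b) :=
            mul_dvd_mul (dvd_mul_left _ _) (qfactP_mul_qfactP_dvd (a + 1) b)

section Hook

variable {α : Type*} [PartialOrder α] [DecidableLE α]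

noncomputable def hookProduct (s : Finset α) : ℤ[X] :=
  ∏ x ∈ s, qnumP #{y ∈ s | y ≤ x}

lemma prod_qnumP_card_filter_le_eq_hookProduct {s t : Finset α} (hts : t ⊆ s)
    (hlower : ∀ x ∈ t, ∀ y ∈ s, y ≤ x → y ∈ t) :
    ∏ x ∈ t, qnumP #{y ∈ s | y ≤ x} = hookProduct t := by
  refine prod_congr rfl fun x hx => congrArg (qnumP ∘ card) ?_
  ext y
  simp only [mem_filter]
  exact ⟨fun ⟨hy, hyx⟩ => ⟨hlower x hx y hy hyx, hyx⟩, fun ⟨hy, hyx⟩ => ⟨hts hy, hyx⟩⟩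

lemma hookProduct_eq_mul_filter (s : Finset α) (p : α → Prop) [DecidablePred p]
    (hp : ∀ x ∈ s, ∀ y ∈ s, y ≤ x → (p y ↔ p x)) :
    hookProduct s = hookProduct {x ∈ s | p x} * hookProduct {x ∈ s | ¬ p x} := by
  rw [hookProduct, ← prod_filter_mul_prod_filter_not s p,
    prod_qnumP_card_filter_le_eq_hookProduct (filter_subset _ _),
    prod_qnumP_card_filter_le_eq_hookProduct (filter_subset _ _)]
  · intro x hx y hy hyx
    simp only [mem_filter] at hx ⊢
    exact ⟨hy, fun hpy => hx.2 ((hp x hx.1 y hy hyx).1 hpy)⟩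
  · intro x hx y hy hyx
    simp only [mem_filter] at hx ⊢
    exact ⟨hy, (hp x hx.1 y hy hyx).2 hx.2⟩

lemma hookProduct_eq_qnumP_mul_erase [DecidableEq α] {s : Finset α} {r : α} (hr : r ∈ s)
    (htop : ∀ x ∈ s, x ≤ r) :
    hookProduct s = qnumP #s * hookProduct (s.erase r) := by
  rw [hookProduct, ← mul_prod_erase s _ hr, filter_true_of_mem htop,
    prod_qnumP_card_filter_le_eq_hookProduct (erase_subset r s)]
  intro x hx y hy hyx
  refine mem_erase.2 ⟨?_, hy⟩
  rintro rfl
  exact (mem_erase.1 hx).1 (le_antisymm (htop x (mem_erase.1 hx).2) hyx)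

theorem hookProduct_dvd_qfactP [DecidableEq α]
    (hforest : ∀ a b c : α, a ≤ b → a ≤ c → b ≤ c ∨ c ≤ b) (s : Finset α) :
    hookProduct s ∣ qfactP #s := by
  induction s using Finset.strongInduction with | H s ih => ?_
  obtain rfl | hne := s.eq_empty_or_nonempty
  · simp [hookProduct, qfactP]
  obtain ⟨r, hrs, hrmax⟩ := exists_maximal hne
  set t := {x ∈ s | x ≤ r}
  set u := {x ∈ s | ¬ x ≤ r}
  have hrt : r ∈ t := mem_filter.2 ⟨hrs, le_rfl⟩
  have htree : hookProduct t ∣ qfactP #t := by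
    have hcard : #t = #(t.erase r) + 1 := (card_erase_add_one hrt).symm
    rw [hookProduct_eq_qnumP_mul_erase hrt fun x hx => (mem_filter.1 hx).2, hcard, qfactP_succ,
      mul_comm]
    exact mul_dvd_mul (ih _ ((erase_ssubset hrt).trans_subset (filter_subset _ s))) dvd_rfl
  have hrest : hookProduct u ∣ qfactP #u :=
    ih _ (filter_ssubset.2 ⟨r, hrs, not_not.2 le_rfl⟩)
  have hsplit : hookProduct s = hookProduct t * hookProduct u := by
    refine hookProduct_eq_mul_filter s (· ≤ r) fun x hx y hy hyx => ⟨fun hyr => ?_, hyx.trans⟩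
    exact (hforest y x r hyx hyr).elim id (hrmax hx)
  rw [hsplit, ← card_filter_add_card_filter_not (· ≤ r)]
  exact (mul_dvd_mul htree hrest).trans (qfactP_mul_qfactP_dvd _ _)

end Hook

/-- Hook length formula for forests: for a finite forest poset `F` (above-sets are
chains) with `c(x) = |{y : y ≤ x}|`, the product `∏_x [c(x)]` divides `[|F|]!` in
`ℤ[δ]`, i.e. `h_F = [|F|]!/∏_x [c(x)]` is a polynomial in `δ`. -/
theorem stmt16 {α : Type*} [Fintype α] [PartialOrder α]
    (hforest : ∀ a b c : α, a ≤ b → a ≤ c → b ≤ c ∨ c ≤ b) :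
    (∏ x : α, qnumP (Nat.card {y : α // y ≤ x})) ∣ qfactP (Fintype.card α) := by
  classical
  convert hookProduct_dvd_qfactP hforest (univ : Finset α) using 1
  · simp only [hookProduct, Nat.card_eq_fintype_card, Fintype.card_subtype]
  · rw [card_univ]
end
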